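/- Let (V,C,u) be an order unit space with a strictly convex cone, g : C° → C° a bijective antihomogeneous order-antimorphism, and x ∈ C°. Let G_x : V → V be a linear bijection with G_x(z) = −lim_{t→0} (g(x+tz) − g(x))/t for all z ∈ V, and let S_x = G_x⁻¹ ∘ g : C° → C°. Then S_x(x) = x and S_x(S_x(y)) = y for all y ∈ C°. -/

import Mathlib

open Set Filter Topology

variable {V : Type*} [NormedAddCommGroup V] [NormedSpace ℝ V]

/-- `(V, C, u)` is an order unit space whose norm is the order unit norm of `(C, u)`:
`C` is an Archimedean cone and `u` is an order unit of it. -/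
structure IsOrderUnitSpace (C : Set V) (u : V) : Prop where
  convex : Convex ℝ C
  smul_mem : ∀ l : ℝ, 0 ≤ l → ∀ x ∈ C, l • x ∈ C
  salient : C ∩ (-C) = {0}
  archimedean : ∀ x : V, ∀ y ∈ C, (∀ n : ℕ, 0 < n → y - (n : ℝ) • x ∈ C) → -x ∈ C
  unit_mem : u ∈ C
  order_unit : ∀ x : V, ∃ l : ℝ, 0 ≤ l ∧ l • u - x ∈ C
  norm_eq : ∀ x : V, ‖x‖ = sInf {l : ℝ | 0 < l ∧ x + l • u ∈ C ∧ l • u - x ∈ C}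

/-- `M(x/y) = inf {β > 0 : x ≤_C β y}`. -/
noncomputable def Mratio (C : Set V) (x y : V) : ℝ :=
  sInf {b : ℝ | 0 < b ∧ b • y - x ∈ C}

/-- The cone `C` is strictly convex: the open segment between any two linearly
independent boundary points lies in the interior. -/
def StrictlyConvexCone (C : Set V) : Prop :=
  ∀ x ∈ frontier C, ∀ y ∈ frontier C, LinearIndependent ℝ ![x, y] →
    openSegment ℝ x y ⊆ interior C

/-- `g` is antihomogeneous on the interior of `C`: `g (λ x) = λ⁻¹ g x`. -/
def IsAntihomogeneous (C : Set V) (g : V → V) : Prop :=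
  ∀ l : ℝ, 0 < l → ∀ x ∈ interior C, g (l • x) = l⁻¹ • g x

/-- `g` is an order-antimorphism of the interior of `C`: `x ≤_C y ↔ g y ≤_C g x`. -/
def IsOrderAntimorphism (C : Set V) (g : V → V) : Prop :=
  ∀ x ∈ interior C, ∀ y ∈ interior C, (y - x ∈ C ↔ g x - g y ∈ C)

/-- A state of `(V, C, u)`: a positive linear functional with `φ u = 1`. -/
def IsState (C : Set V) (u : V) (φ : V →ₗ[ℝ] ℝ) : Prop :=
  (∀ x ∈ C, 0 ≤ φ x) ∧ φ u = 1


/-!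
Write `M(a/b) = inf {β > 0 : a ≤ β b}`. Since `g` reverses the order and is antihomogeneous,
`M(g b / g a) = M(a/b)`. Differentiating `g` at `x` shows that `G_x x = g x` and that `G_x` is
an order automorphism of `V`, hence a homeomorphism. So `S = G_x⁻¹ ∘ g` is again an
antihomogeneous order-antimorphism of `C°`; it fixes `x` and has derivative `-id` at `x`.

For `m` between `a` and `b` one has `M(a/b) = M(a/m) M(m/b)`, and in a strictly convex cone this
equality forces `m` into the plane of `a` and `b`. Transporting the segment `[x, y]` by `S` and
differentiating at `x` shows that `S y` lies in the plane of `x` and `y`, either on the ray of `y`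
or beyond the ray of `x`. Applying this twice puts `S (S y)` in that plane on the side of `y`, with
the same values of `M(x/·)` and `M(·/x)` as `y`. On one side of the ray of `x` these two numbers
determine the point, so `S (S y) = y`.
-/

namespace IsOrderUnitSpace

variable {C : Set V} {u : V}

theorem zero_mem (hC : IsOrderUnitSpace C u) : (0 : V) ∈ C := by
  simpa using hC.smul_mem 0 le_rfl u hC.unit_mem

theorem add_mem (hC : IsOrderUnitSpace C u) {a b : V} (ha : a ∈ C) (hb : b ∈ C) :
    a + b ∈ C := by
  convert hC.smul_mem 2 zero_le_two _
    (hC.convex ha hb one_half_pos.le one_half_pos.le (add_halves 1)) using 1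
  module

theorem smul_mem_iff (hC : IsOrderUnitSpace C u) {c : ℝ} (hc : 0 < c) {p : V} :
    c • p ∈ C ↔ p ∈ C := by
  refine ⟨fun h => ?_, hC.smul_mem c hc.le p⟩
  simpa [smul_smul, inv_mul_cancel₀ hc.ne'] using hC.smul_mem c⁻¹ (inv_nonneg.2 hc.le) _ h

theorem eq_zero_of_mem_of_neg_mem (hC : IsOrderUnitSpace C u) {a : V} (ha : a ∈ C)
    (hna : -a ∈ C) : a = 0 := by
  have : a ∈ C ∩ -C := ⟨ha, hna⟩
  rwa [hC.salient] at this

theorem mem_of_forall_add_smul_mem (hC : IsOrderUnitSpace C u) {p y : V} (hy : y ∈ C)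
    (h : ∀ ε : ℝ, 0 < ε → p + ε • y ∈ C) : p ∈ C := by
  have := hC.archimedean (-p) y hy fun n hn => by
    have hn' : (0 : ℝ) < n := Nat.cast_pos.2 hn
    convert hC.smul_mem n hn'.le _ (h n⁻¹ (inv_pos.2 hn')) using 1
    match_scalars <;> field_simp
  simpa using this

theorem norm_le_iff (hC : IsOrderUnitSpace C u) {z : V} {l : ℝ} (hl : 0 ≤ l) :
    ‖z‖ ≤ l ↔ z + l • u ∈ C ∧ l • u - z ∈ C := by
  have mono : ∀ {s t : ℝ}, s ≤ t → (z + s • u ∈ C ∧ s • u - z ∈ C) →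
      z + t • u ∈ C ∧ t • u - z ∈ C := fun hst h => by
    have hu := hC.smul_mem _ (sub_nonneg.2 hst) u hC.unit_mem
    exact ⟨by simpa [add_assoc, ← add_smul] using hC.add_mem h.1 hu,
      by simpa [sub_add_eq_add_sub, ← add_smul] using hC.add_mem h.2 hu⟩
  constructor
  · intro hz
    have hne : {s : ℝ | 0 < s ∧ z + s • u ∈ C ∧ s • u - z ∈ C}.Nonempty := by
      obtain ⟨l₁, hl₁, h₁⟩ := hC.order_unit z
      obtain ⟨l₂, hl₂, h₂⟩ := hC.order_unit (-z)
      refine ⟨l₁ + l₂ + 1, by positivity, ?_, ?_⟩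
      · convert hC.add_mem (hC.add_mem h₂ (hC.smul_mem l₁ hl₁ u hC.unit_mem))
          hC.unit_mem using 1
        module
      · convert hC.add_mem (hC.add_mem h₁ (hC.smul_mem l₂ hl₂ u hC.unit_mem))
          hC.unit_mem using 1
        module
    have hlε : ∀ ε : ℝ, 0 < ε → z + (l + ε) • u ∈ C ∧ (l + ε) • u - z ∈ C := by
      intro ε hε
      obtain ⟨s, hs, hsl⟩ := exists_lt_of_csInf_lt hne
        (show sInf _ < l + ε by rw [← hC.norm_eq]; linarith)
      exact mono hsl.le hs.2
    constructor <;> refine hC.mem_of_forall_add_smul_mem hC.unit_mem fun ε hε => ?_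
    · simpa [add_assoc, ← add_smul] using (hlε ε hε).1
    · simpa [sub_add_eq_add_sub, ← add_smul] using (hlε ε hε).2
  · rintro ⟨h₁, h₂⟩
    refine le_of_forall_pos_le_add fun ε hε => ?_
    rw [hC.norm_eq z]
    exact csInf_le ⟨0, fun _ h => h.1.le⟩
      ⟨by positivity, mono (by linarith) ⟨h₁, h₂⟩⟩

theorem isClosed (hC : IsOrderUnitSpace C u) : IsClosed C := by
  refine isClosed_of_closure_subset fun v hv => ?_
  refine hC.mem_of_forall_add_smul_mem hC.unit_mem fun ε hε => ?_
  obtain ⟨c, hc, hvc⟩ := Metric.mem_closure_iff.1 hv ε hε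
  have := ((hC.norm_le_iff hε.le).1 (by rw [← dist_eq_norm]; exact hvc.le)).1
  convert hC.add_mem this hc using 1
  abel

theorem mem_interior_iff (hC : IsOrderUnitSpace C u) {z : V} :
    z ∈ interior C ↔ ∃ ε : ℝ, 0 < ε ∧ z - ε • u ∈ C := by
  constructor
  · intro hz
    have hlim : Tendsto (fun ε : ℝ => z - ε • u) (𝓝[>] 0) (𝓝 z) := by
      have : Continuous fun ε : ℝ => z - ε • u := by fun_prop
      simpa using tendsto_nhdsWithin_of_tendsto_nhds (this.tendsto 0)
    obtain ⟨ε, hεC, hε⟩ :=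
      ((hlim.eventually (isOpen_interior.mem_nhds hz)).and self_mem_nhdsWithin).exists
    exact ⟨ε, hε, interior_subset hεC⟩
  · rintro ⟨ε, hε, hz⟩
    refine mem_interior_iff_mem_nhds.2 (Metric.mem_nhds_iff.2 ⟨ε, hε, fun w hw => ?_⟩)
    have := ((hC.norm_le_iff hε.le).1 (le_of_lt (by rwa [← dist_eq_norm]))).1
    simpa using hC.add_mem hz this

theorem add_mem_interior (hC : IsOrderUnitSpace C u) {a b : V} (ha : a ∈ interior C)
    (hb : b ∈ C) : a + b ∈ interior C := by
  obtain ⟨ε, hε, haε⟩ := hC.mem_interior_iff.1 ha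
  refine hC.mem_interior_iff.2 ⟨ε, hε, ?_⟩
  simpa [add_sub_right_comm] using hC.add_mem haε hb

theorem smul_mem_interior (hC : IsOrderUnitSpace C u) {c : ℝ} (hc : 0 < c) {a : V}
    (ha : a ∈ interior C) : c • a ∈ interior C := by
  obtain ⟨ε, hε, haε⟩ := hC.mem_interior_iff.1 ha
  refine hC.mem_interior_iff.2 ⟨c * ε, by positivity, ?_⟩
  simpa [smul_sub, smul_smul] using hC.smul_mem c hc.le _ haε

theorem zero_notMem_interior [Nontrivial V] (hC : IsOrderUnitSpace C u) :
    (0 : V) ∉ interior C := by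
  intro h0
  obtain ⟨ε, hε, hεu⟩ := hC.mem_interior_iff.1 h0
  have hu : u = 0 := by
    have := hC.eq_zero_of_mem_of_neg_mem (hC.smul_mem ε hε.le u hC.unit_mem) (by simpa using hεu)
    exact (smul_eq_zero.1 this).resolve_left hε.ne'
  have hall : ∀ p : V, p ∈ C := fun p => by simpa [hu] using (hC.order_unit (-p)).choose_spec.2
  obtain ⟨p, hp⟩ := exists_ne (0 : V)
  exact hp (hC.eq_zero_of_mem_of_neg_mem (hall p) (hall (-p)))

theorem pos_of_eq_smul [Nontrivial V] (hC : IsOrderUnitSpace C u) {a b : V} {c : ℝ}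
    (ha : a ∈ interior C) (hb : b ∈ C) (hab : a = c • b) : 0 < c := by
  by_contra! hc
  have hna : -a ∈ C := by simpa [hab] using hC.smul_mem (-c) (neg_nonneg.2 hc) b hb
  exact hC.zero_notMem_interior (hC.eq_zero_of_mem_of_neg_mem (interior_subset ha) hna ▸ ha)

theorem continuous_of_mapsTo {W : Type*} [NormedAddCommGroup W] [NormedSpace ℝ W]
    {C' : Set W} {u' : W} (hC : IsOrderUnitSpace C u) (hC' : IsOrderUnitSpace C' u')
    (f : V →ₗ[ℝ] W) (hf : MapsTo f C C') : Continuous f := by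
  refine AddMonoidHomClass.continuous_of_bound f ‖f u‖ fun p => ?_
  obtain ⟨hp₁, hp₂⟩ := (hC.norm_le_iff (norm_nonneg p)).1 le_rfl
  obtain ⟨hu₁, hu₂⟩ := (hC'.norm_le_iff (norm_nonneg (f u))).1 le_rfl
  have h₁ := hf hp₁
  have h₂ := hf hp₂
  rw [map_add, map_smul] at h₁
  rw [map_sub, map_smul] at h₂
  rw [mul_comm, hC'.norm_le_iff (by positivity)]
  constructor
  · convert hC'.add_mem h₁ (hC'.smul_mem ‖p‖ (norm_nonneg p) _ hu₂) using 1
    module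
  · convert hC'.add_mem h₂ (hC'.smul_mem ‖p‖ (norm_nonneg p) _ hu₂) using 1
    module

end IsOrderUnitSpace

section Mratio

variable {C : Set V} {u : V} {a b m : V}

theorem Mratio_le {β : ℝ} (hβ : 0 < β) (h : β • b - a ∈ C) : Mratio C a b ≤ β :=
  csInf_le ⟨0, fun _ h => h.1.le⟩ ⟨hβ, h⟩

theorem Mratio_nonneg (C : Set V) (a b : V) : 0 ≤ Mratio C a b :=
  Real.sInf_nonneg fun _ h => h.1.le

namespace IsOrderUnitSpace

theorem Mratio_smul_sub_mem (hC : IsOrderUnitSpace C u) (hb : b ∈ interior C) (a : V) :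
    Mratio C a b • b - a ∈ C := by
  have hne : {β : ℝ | 0 < β ∧ β • b - a ∈ C}.Nonempty := by
    obtain ⟨ε, hε, hbε⟩ := hC.mem_interior_iff.1 hb
    obtain ⟨l, hl, hla⟩ := hC.order_unit a
    refine ⟨(l + 1) / ε, by positivity, ?_⟩
    convert hC.add_mem (hC.smul_mem ((l + 1) / ε) (by positivity) _ hbε)
      (hC.add_mem hC.unit_mem hla) using 1
    match_scalars
    all_goals field_simp
    ring
  refine hC.mem_of_forall_add_smul_mem (interior_subset hb) fun ε hε => ?_
  obtain ⟨β, ⟨-, hβ⟩, hβlt⟩ := exists_lt_of_csInf_lt hne (lt_add_of_pos_right _ hε)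
  change β < Mratio C a b + ε at hβlt
  convert hC.add_mem hβ (hC.smul_mem _ (sub_nonneg.2 hβlt.le) b (interior_subset hb)) using 1
  module

theorem eq_Mratio_smul_of_Mratio_mul_Mratio_eq_one (hC : IsOrderUnitSpace C u)
    (ha : a ∈ interior C) (hb : b ∈ interior C) (h : Mratio C a b * Mratio C b a = 1) :
    a = Mratio C a b • b := by
  have hneg : -(Mratio C a b • b - a) ∈ C := by
    convert hC.smul_mem _ (Mratio_nonneg C a b) _ (hC.Mratio_smul_sub_mem ha b) using 1
    rw [smul_sub, smul_smul, h, one_smul, neg_sub]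
  exact (sub_eq_zero.1 (hC.eq_zero_of_mem_of_neg_mem (hC.Mratio_smul_sub_mem hb a) hneg)).symm

variable [Nontrivial V]

theorem Mratio_pos (hC : IsOrderUnitSpace C u) (ha : a ∈ interior C) (hb : b ∈ interior C) :
    0 < Mratio C a b := by
  refine (Mratio_nonneg C a b).lt_of_ne fun h0 => hC.zero_notMem_interior ?_
  have hna := hC.Mratio_smul_sub_mem hb a
  rw [← h0, zero_smul, zero_sub] at hna
  rwa [← hC.eq_zero_of_mem_of_neg_mem (interior_subset ha) hna]

theorem Mratio_le_mul (hC : IsOrderUnitSpace C u) (ha : a ∈ interior C) (hb : b ∈ interior C)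
    (hm : m ∈ interior C) : Mratio C a m ≤ Mratio C a b * Mratio C b m := by
  refine Mratio_le (mul_pos (hC.Mratio_pos ha hb) (hC.Mratio_pos hb hm)) ?_
  convert hC.add_mem (hC.smul_mem _ (Mratio_nonneg C a b) _ (hC.Mratio_smul_sub_mem hm b))
    (hC.Mratio_smul_sub_mem hb a) using 1
  module

theorem Mratio_smul_left (hC : IsOrderUnitSpace C u) {c : ℝ} (hc : 0 < c) (ha : a ∈ interior C)
    (hb : b ∈ interior C) : Mratio C (c • a) b = c * Mratio C a b := by
  have key : ∀ {c : ℝ} {a : V}, 0 < c → a ∈ interior C →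
      Mratio C (c • a) b ≤ c * Mratio C a b :=
    fun {c a} hc ha => Mratio_le (mul_pos hc (hC.Mratio_pos ha hb)) (by
      simpa [smul_sub, smul_smul] using hC.smul_mem c hc.le _ (hC.Mratio_smul_sub_mem hb a))
  refine le_antisymm (key hc ha) ?_
  have := key (inv_pos.2 hc) (hC.smul_mem_interior hc ha)
  rw [smul_smul, inv_mul_cancel₀ hc.ne', one_smul] at this
  rwa [← le_inv_mul_iff₀ hc]

theorem Mratio_smul_sub_mem_frontier (hC : IsOrderUnitSpace C u) (ha : a ∈ interior C)
    (hb : b ∈ interior C) : Mratio C a b • b - a ∈ frontier C := by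
  refine hC.isClosed.frontier_eq ▸ ⟨hC.Mratio_smul_sub_mem hb a, fun hint => ?_⟩
  have hM := hC.Mratio_pos ha hb
  have hlim : Tendsto (fun η : ℝ => (Mratio C a b - η) • b - a) (𝓝[>] 0)
      (𝓝 (Mratio C a b • b - a)) := by
    have : Continuous fun η : ℝ => (Mratio C a b - η) • b - a := by fun_prop
    simpa using tendsto_nhdsWithin_of_tendsto_nhds (this.tendsto 0)
  have hsmall : ∀ᶠ η : ℝ in 𝓝[>] 0, η < Mratio C a b :=
    tendsto_nhdsWithin_of_tendsto_nhds tendsto_id |>.eventually (gt_mem_nhds hM)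
  obtain ⟨η, ⟨hηC, hηM⟩, hη⟩ := (((hlim.eventually (isOpen_interior.mem_nhds hint)).and
    hsmall).and self_mem_nhdsWithin).exists
  have := Mratio_le (sub_pos.2 hηM) (interior_subset hηC)
  linarith [show (0 : ℝ) < η from hη]

theorem Mratio_eq_mul_of_eq_smul_add_smul (hC : IsOrderUnitSpace C u) (ha : a ∈ interior C)
    (hb : b ∈ interior C) (hm : m ∈ interior C) {l n : ℝ} (hl : 0 ≤ l) (hn : 0 ≤ n)
    (hm_eq : m = l • a + n • b) : Mratio C a b = Mratio C a m * Mratio C m b := by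
  set β := Mratio C a b
  have hβ : 0 < β := hC.Mratio_pos ha hb
  have hκ : 0 < l * β + n := by
    by_contra! hκ
    have hn0 : n = 0 := by nlinarith [mul_nonneg hl hβ.le]
    have hl0 : l = 0 := by nlinarith
    exact hC.zero_notMem_interior (by simpa [hm_eq, hl0, hn0] using hm)
  have hβb := hC.Mratio_smul_sub_mem hb a
  have h₁ : Mratio C a m ≤ β / (l * β + n) := Mratio_le (by positivity) (by
    convert hC.smul_mem (n / (l * β + n)) (by positivity) _ hβb using 1
    rw [hm_eq]
    have : β * l + n ≠ 0 := (mul_comm l β ▸ hκ).ne'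
    match_scalars <;> field_simp <;> ring)
  have h₂ : Mratio C m b ≤ l * β + n := Mratio_le hκ (by
    convert hC.smul_mem l hl _ hβb using 1
    rw [hm_eq]
    module)
  refine le_antisymm (hC.Mratio_le_mul ha hm hb) ?_
  calc Mratio C a m * Mratio C m b ≤ β / (l * β + n) * (l * β + n) :=
        mul_le_mul h₁ h₂ (Mratio_nonneg C m b) (by positivity)
    _ = β := div_mul_cancel₀ β hκ.ne'

theorem eq_Mratio_smul_of_eq_smul_add_smul (hC : IsOrderUnitSpace C u) {z w : V}
    (ha : a ∈ interior C) (hz : z ∈ interior C) (hw : w ∈ interior C) {l n : ℝ}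
    (hl : 0 ≤ l) (hn : 0 ≤ n) (hw_eq : w = l • a + n • z)
    (h : Mratio C a w * Mratio C w a = Mratio C a z * Mratio C z a) :
    w = Mratio C w z • z := by
  have h₁ := hC.Mratio_eq_mul_of_eq_smul_add_smul ha hz hw hl hn hw_eq
  have h₂ := hC.Mratio_eq_mul_of_eq_smul_add_smul hz ha hw hn hl (by rw [hw_eq, add_comm])
  have hpos := mul_pos (hC.Mratio_pos ha hw) (hC.Mratio_pos hw ha)
  refine hC.eq_Mratio_smul_of_Mratio_mul_Mratio_eq_one hw hz
    (mul_left_cancel₀ hpos.ne' ?_)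
  linear_combination -(Mratio C z w * Mratio C w a) * h₁ - Mratio C a z * h₂ - h

theorem exists_pos_smul_of_eq_smul_add_smul (hC : IsOrderUnitSpace C u) {x y z : V}
    (hx : x ∈ interior C) (hy : y ∈ interior C) (hz : z ∈ interior C) {α β : ℝ}
    (hβ : 0 < β)     (hz_eq : z = α • x + β • y)
    (h : Mratio C x z * Mratio C z x = Mratio C x y * Mratio C y x) :
    ∃ c : ℝ, 0 < c ∧ z = c • y := by
  rcases le_or_gt 0 α with hα | hα
  · exact ⟨_, hC.Mratio_pos hz hy,
      hC.eq_Mratio_smul_of_eq_smul_add_smul hx hy hz hα hβ.le hz_eq h⟩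
  · have hy_eq : y = (-α / β) • x + β⁻¹ • z := by
      rw [hz_eq]
      match_scalars
      · field_simp
      · field_simp
        ring
    have := hC.eq_Mratio_smul_of_eq_smul_add_smul hx hz hy (div_nonneg (by linarith) hβ.le)
      (inv_nonneg.2 hβ.le) hy_eq h.symm
    refine ⟨(Mratio C y z)⁻¹, inv_pos.2 (hC.Mratio_pos hy hz), ?_⟩
    nth_rw 2 [this]
    rw [smul_smul, inv_mul_cancel₀ (hC.Mratio_pos hy hz).ne', one_smul]

end IsOrderUnitSpace

end Mratio

namespace StrictlyConvexCone

variable {C : Set V} {u : V}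

theorem not_linearIndependent (hsc : StrictlyConvexCone C) (hC : IsOrderUnitSpace C u)
    {p q : V} (hp : p ∈ frontier C) (hq : q ∈ frontier C) {c : ℝ} (hc : 0 < c)
    (hpq : p + c • q ∉ interior C) : ¬LinearIndependent ℝ ![p, q] := fun hLI => hpq <| by
  have hmid := hsc p hp q hq hLI
    ⟨(1 + c)⁻¹, c / (1 + c), by positivity, by positivity, by field_simp, rfl⟩
  convert hC.smul_mem_interior (by positivity : (0 : ℝ) < 1 + c) hmid using 1
  match_scalars <;> field_simp

theorem mem_span_pair_of_Mratio_eq_mul [Nontrivial V] (hsc : StrictlyConvexCone C)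
    (hC : IsOrderUnitSpace C u) {a b m : V} (ha : a ∈ interior C) (hb : b ∈ interior C)
    (hm : m ∈ interior C) (hab : LinearIndependent ℝ ![a, b])
    (h : Mratio C a b = Mratio C a m * Mratio C m b) : m ∈ Submodule.span ℝ {a, b} := by
  set α := Mratio C a m
  set γ := Mratio C m b
  -- `α m - a` and `γ b - m` are boundary points, and so is
  -- `(α m - a) + α (γ b - m) = M(a/b) b - a`.
  have hdep := hsc.not_linearIndependent hC (hC.Mratio_smul_sub_mem_frontier ha hm)
    (hC.Mratio_smul_sub_mem_frontier hm hb) (hC.Mratio_pos ha hm) (by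
      rw [show α • m - a + α • (γ • b - m) = Mratio C a b • b - a by rw [h]; module]
      exact (hC.Mratio_smul_sub_mem_frontier ha hb).2)
  obtain ⟨s, t, hst, hne⟩ :
      ∃ s t : ℝ, s • (α • m - a) + t • (γ • b - m) = 0 ∧ ¬(s = 0 ∧ t = 0) := by
    simpa [LinearIndependent.pair_iff] using hdep
  rw [Submodule.mem_span_pair]
  by_cases hst' : s * α = t
  · have hs : s = 0 := by
      refine (LinearIndependent.pair_iff.1 hab s (-(s * α * γ)) ?_).1
      rw [← neg_eq_zero, ← hst, ← hst']
      module
    exact absurd ⟨hs, by rw [← hst', hs, zero_mul]⟩ hne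
  · have hD : s * α - t ≠ 0 := sub_ne_zero.2 hst'
    have hm_eq : (s * α - t) • m = s • a - (t * γ) • b := by
      rw [← sub_eq_zero, ← hst]
      module
    refine ⟨(s * α - t)⁻¹ * s, -((s * α - t)⁻¹ * (t * γ)), ?_⟩
    rw [← inv_smul_smul₀ hD m, hm_eq]
    module

end StrictlyConvexCone

namespace IsOrderAntimorphism

variable {C : Set V} {u : V} {g : V → V}

theorem smul_sub_mem_iff (hmor : IsOrderAntimorphism C g) (hanti : IsAntihomogeneous C g)
    (hC : IsOrderUnitSpace C u) {a b : V} (ha : a ∈ interior C) (hb : b ∈ interior C)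
    {β : ℝ} (hβ : 0 < β) : β • b - a ∈ C ↔ β • g a - g b ∈ C := by
  rw [hmor a ha (β • b) (hC.smul_mem_interior hβ hb), hanti β hβ b hb,
    ← hC.smul_mem_iff hβ, smul_sub, smul_smul, mul_inv_cancel₀ hβ.ne', one_smul]

theorem Mratio_apply (hmor : IsOrderAntimorphism C g) (hanti : IsAntihomogeneous C g)
    (hC : IsOrderUnitSpace C u) {a b : V} (ha : a ∈ interior C) (hb : b ∈ interior C) :
    Mratio C (g b) (g a) = Mratio C a b := by
  unfold Mratio
  congr 1
  ext β
  exact and_congr_right fun hβ => (hmor.smul_sub_mem_iff hanti hC ha hb hβ).symm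

theorem injOn (hmor : IsOrderAntimorphism C g) (hC : IsOrderUnitSpace C u) :
    InjOn g (interior C) := fun a ha b hb hab => by
  have h₁ := (hmor a ha b hb).2 (by simpa [hab] using hC.zero_mem)
  have h₂ := (hmor b hb a ha).2 (by simpa [hab] using hC.zero_mem)
  exact sub_eq_zero.1 (hC.eq_zero_of_mem_of_neg_mem h₂ (by simpa using h₁))

theorem neg_deriv_mem (hmor : IsOrderAntimorphism C g) (hC : IsOrderUnitSpace C u)
    {x w v : V} (hx : x ∈ interior C)
    (h : Tendsto (fun t : ℝ => t⁻¹ • (g (x + t • w) - g x)) (𝓝[≠] 0) (𝓝 (-v)))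
    (hw : w ∈ C) : v ∈ C := by
  have hlim : Tendsto (fun t : ℝ => t⁻¹ • (g x - g (x + t • w))) (𝓝[>] 0) (𝓝 v) := by
    simpa [← smul_neg] using (h.mono_left (nhdsGT_le_nhdsNE 0)).neg
  refine hC.isClosed.mem_of_tendsto hlim (eventually_mem_nhdsWithin.mono fun t ht => ?_)
  have htw := hC.smul_mem t (le_of_lt ht) w hw
  refine hC.smul_mem _ (inv_nonneg.2 (le_of_lt ht)) _ ((hmor x hx _ ?_).1 (by simpa using htw))
  exact hC.add_mem_interior hx htw

theorem mem_of_neg_deriv_mem (hmor : IsOrderAntimorphism C g) (hanti : IsAntihomogeneous C g)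
    (hC : IsOrderUnitSpace C u) {x w v : V} (hx : x ∈ interior C) (hgx : g x ∈ interior C)
    (h : Tendsto (fun t : ℝ => t⁻¹ • (g (x + t • w) - g x)) (𝓝[≠] 0) (𝓝 (-v)))
    (hv : v ∈ C) : w ∈ C := by
  obtain ⟨δ, hδ, hgxδ⟩ := hC.mem_interior_iff.1 hgx
  refine hC.mem_of_forall_add_smul_mem (interior_subset hx) fun s hs => ?_
  set ε : ℝ → V := fun t => t⁻¹ • (g (x + t • w) - g x) + v
  have hε : Tendsto ε (𝓝[>] 0) (𝓝 0) := by
    simpa [ε] using (h.mono_left (nhdsGT_le_nhdsNE 0)).add_const v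
  have h_int : ∀ᶠ t : ℝ in 𝓝[>] 0, x + t • w ∈ interior C := by
    have : Continuous fun t : ℝ => x + t • w := by fun_prop
    exact tendsto_nhdsWithin_of_tendsto_nhds (by simpa using this.tendsto 0)
      |>.eventually (isOpen_interior.mem_nhds hx)
  have h_small : ∀ᶠ t : ℝ in 𝓝[>] 0, ‖ε t‖ ≤ s * δ :=
    (by simpa using hε.norm : Tendsto (fun t => ‖ε t‖) _ (𝓝 0)).eventually_le_const
      (by positivity)
  obtain ⟨t, ⟨hxt, hεt⟩, ht⟩ := ((h_int.and h_small).and self_mem_nhdsWithin).exists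
  have ht : (0 : ℝ) < t := ht
  have hg_eq : g (x + t • w) = g x + t • ε t - t • v := by
    simp only [ε, smul_add, smul_smul, mul_inv_cancel₀ ht.ne', one_smul]
    abel
  -- `g (x + t w) ≤ (1 + t s) g x = g ((1 + t s)⁻¹ x)`, hence `x ≤ (1 + t s) (x + t w)`.
  have hgle : (1 + t * s) • g x - g (x + t • w) ∈ C := by
    have hεu := ((hC.norm_le_iff (by positivity)).1 hεt).2
    convert hC.add_mem (hC.add_mem (hC.smul_mem (t * s) (by positivity) _ hgxδ)
      (hC.smul_mem t ht.le _ hεu)) (hC.smul_mem t ht.le _ hv) using 1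
    rw [hg_eq]
    module
  have hxle := (hmor.smul_sub_mem_iff hanti hC hx hxt (by positivity)).2 hgle
  rw [← hC.smul_mem_iff (by positivity : 0 < (1 + t * s) * t)]
  convert hC.add_mem hxle (hC.smul_mem ((t * s) ^ 2) (by positivity) x (interior_subset hx))
    using 1
  module

end IsOrderAntimorphism

theorem IsAntihomogeneous.tendsto_slope_self {C : Set V} {g : V → V}
    (hanti : IsAntihomogeneous C g) {x : V} (hx : x ∈ interior C) :
    Tendsto (fun t : ℝ => t⁻¹ • (g (x + t • x) - g x)) (𝓝[≠] 0) (𝓝 (-g x)) := by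
  have hcont : ContinuousAt (fun t : ℝ => -(1 + t)⁻¹ • g x) 0 := by
    fun_prop (disch := norm_num)
  have hlim : Tendsto (fun t : ℝ => -(1 + t)⁻¹ • g x) (𝓝 0) (𝓝 (-g x)) := by
    convert hcont.tendsto using 2
    simp
  refine (tendsto_nhdsWithin_of_tendsto_nhds hlim).congr' ?_
  filter_upwards [nhdsWithin_le_nhds (eventually_gt_nhds (by norm_num : (-1 : ℝ) < 0)),
    self_mem_nhdsWithin] with t ht ht0
  have ht' : 0 < 1 + t := by linarith
  have ht0' : t ≠ 0 := ht0
  rw [show x + t • x = (1 + t) • x by module, hanti _ ht' x hx]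
  match_scalars
  field_simp
  ring

/-- The properties of the symmetry `S_x = G_x⁻¹ ∘ g` that make it an involution. -/
structure IsSymmetryAt (C : Set V) (k : V → V) (x : V) : Prop where
  mapsTo : MapsTo k (interior C) (interior C)
  antihomogeneous : IsAntihomogeneous C k
  antimorphism : IsOrderAntimorphism C k
  apply_self : k x = x
  tendsto_slope :
    ∀ d : V, Tendsto (fun t : ℝ => t⁻¹ • (k (x + t • d) - x)) (𝓝[>] 0) (𝓝 (-d))

namespace IsSymmetryAt

variable {C : Set V} {u : V} {k : V → V} {x y : V}

theorem Mratio_self_apply (hk : IsSymmetryAt C k x) (hC : IsOrderUnitSpace C u)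
    (hx : x ∈ interior C) (hy : y ∈ interior C) : Mratio C x (k y) = Mratio C y x := by
  simpa [hk.apply_self] using hk.antimorphism.Mratio_apply hk.antihomogeneous hC hy hx

theorem Mratio_apply_self (hk : IsSymmetryAt C k x) (hC : IsOrderUnitSpace C u)
    (hx : x ∈ interior C) (hy : y ∈ interior C) : Mratio C (k y) x = Mratio C x y := by
  simpa [hk.apply_self] using hk.antimorphism.Mratio_apply hk.antihomogeneous hC hx hy

variable [Nontrivial V]

theorem linearIndependent_apply (hk : IsSymmetryAt C k x) (hC : IsOrderUnitSpace C u)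
    (hx : x ∈ interior C) (hy : y ∈ interior C) (hxy : LinearIndependent ℝ ![x, y]) :
    LinearIndependent ℝ ![x, k y] := by
  have hxy' := linearIndependent_fin2.1 hxy
  simp only [Matrix.cons_val_one, Matrix.cons_val_zero] at hxy'
  refine linearIndependent_fin2.2 ⟨?_, fun c hc => ?_⟩
  · exact fun h0 => hC.zero_notMem_interior (h0 ▸ hk.mapsTo hy)
  simp only [Matrix.cons_val_one, Matrix.cons_val_zero] at hc
  have hc0 := hC.pos_of_eq_smul hx (interior_subset (hk.mapsTo hy)) hc.symm
  have hyx : y = c • x := hk.antimorphism.injOn hC hy (hC.smul_mem_interior hc0 hx) (by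
    rw [hk.antihomogeneous c hc0 x hx, hk.apply_self, ← hc, inv_smul_smul₀ hc0.ne'])
  exact hxy'.2 c⁻¹ (by rw [hyx, inv_smul_smul₀ hc0.ne'])

theorem mem_span_pair_apply (hk : IsSymmetryAt C k x) (hC : IsOrderUnitSpace C u)
    (hsc : StrictlyConvexCone C) (hx : x ∈ interior C) (hy : y ∈ interior C)
    (hxy : LinearIndependent ℝ ![x, y]) : y ∈ Submodule.span ℝ {x, k y} := by
  set P := Submodule.span ℝ {x, k y}
  have : FiniteDimensional ℝ P := FiniteDimensional.span_of_finite ℝ (Set.toFinite _)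
  have hxP : x ∈ P := Submodule.subset_span (by simp)
  -- Equality in `M(y/x) ≤ M(y/m) M(m/x)` on the segment `[x, y]` is transported by `k`.
  have hslope : ∀ᶠ t : ℝ in 𝓝[>] 0, t⁻¹ • (k (x + t • (y - x)) - x) ∈ P := by
    filter_upwards [Ioc_mem_nhdsGT zero_lt_one] with t ht
    have hm : x + t • (y - x) ∈ interior C := by
      convert hC.add_mem_interior (hC.smul_mem_interior ht.1 hy)
        (hC.smul_mem (1 - t) (sub_nonneg.2 ht.2) x (interior_subset hx)) using 1
      module
    have hseg := hC.Mratio_eq_mul_of_eq_smul_add_smul hy hx hm ht.1.le (sub_nonneg.2 ht.2)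
      (by module)
    have heq : Mratio C x (k y) =
        Mratio C x (k (x + t • (y - x))) * Mratio C (k (x + t • (y - x))) (k y) := by
      rw [hk.Mratio_self_apply hC hx hy, hk.Mratio_self_apply hC hx hm,
        hk.antimorphism.Mratio_apply hk.antihomogeneous hC hy hm, hseg, mul_comm]
    exact P.smul_mem _ (P.sub_mem (hsc.mem_span_pair_of_Mratio_eq_mul hC hx (hk.mapsTo hy)
      (hk.mapsTo hm) (hk.linearIndependent_apply hC hx hy hxy) heq) hxP)
  have hlim := (Submodule.closed_of_finiteDimensional P).mem_of_tendsto
    (hk.tendsto_slope (y - x)) hslope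
  simpa using P.sub_mem hxP hlim

theorem exists_eq_smul_add_smul (hk : IsSymmetryAt C k x) (hC : IsOrderUnitSpace C u)
    (hsc : StrictlyConvexCone C) (hx : x ∈ interior C) (hy : y ∈ interior C)
    (hxy : LinearIndependent ℝ ![x, y]) :
    ∃ α β : ℝ, β ≠ 0 ∧ k y = α • x + β • y := by
  obtain ⟨γ, δ, hγδ⟩ := Submodule.mem_span_pair.1 (hk.mem_span_pair_apply hC hsc hx hy hxy)
  have hδ : δ ≠ 0 := by
    rintro rfl
    have := (LinearIndependent.pair_iff.1 hxy γ (-1) (by rw [← hγδ]; module)).2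
    norm_num at this
  refine ⟨-(δ⁻¹ * γ), δ⁻¹, inv_ne_zero hδ, ?_⟩
  rw [← inv_smul_smul₀ hδ (k y), eq_sub_of_add_eq' hγδ]
  module

theorem apply_apply (hk : IsSymmetryAt C k x) (hC : IsOrderUnitSpace C u)
    (hsc : StrictlyConvexCone C) (hx : x ∈ interior C) (hy : y ∈ interior C) :
    k (k y) = y := by
  have hky := hk.mapsTo hy
  have hkky := hk.mapsTo hky
  by_cases hxy : LinearIndependent ℝ ![x, y]
  swap
  · rw [LinearIndependent.pair_symm_iff, linearIndependent_fin2] at hxy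
    have hx0 : x ≠ 0 := fun h0 => hC.zero_notMem_interior (h0 ▸ hx)
    obtain ⟨c, hc⟩ : ∃ c : ℝ, c • x = y := by simpa [hx0] using hxy
    have hc0 := hC.pos_of_eq_smul hy (interior_subset hx) hc.symm
    rw [← hc, hk.antihomogeneous c hc0 x hx, hk.apply_self,
      hk.antihomogeneous c⁻¹ (inv_pos.2 hc0) x hx, inv_inv, hk.apply_self]
  have hD₁ : Mratio C x (k y) * Mratio C (k y) x = Mratio C x y * Mratio C y x := by
    rw [hk.Mratio_self_apply hC hx hy, hk.Mratio_apply_self hC hx hy, mul_comm]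
  obtain ⟨α, β, hβ, hky_eq⟩ := hk.exists_eq_smul_add_smul hC hsc hx hy hxy
  rcases hβ.lt_or_gt with hβ | hβ
  · -- `k y` lies beyond the ray of `x`, and `k (k y)` lies beyond it again or on the ray of `k y`.
    have hD₂ : Mratio C x (k (k y)) * Mratio C (k (k y)) x =
        Mratio C x (k y) * Mratio C (k y) x := by
      rw [hk.Mratio_self_apply hC hx hky, hk.Mratio_apply_self hC hx hky, mul_comm]
    obtain ⟨α', β', hβ', hkky_eq⟩ := hk.exists_eq_smul_add_smul hC hsc hx hky
      (hk.linearIndependent_apply hC hx hy hxy)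
    rcases hβ'.lt_or_gt with hβ' | hβ'
    · obtain ⟨c, hc, hc_eq⟩ := hC.exists_pos_smul_of_eq_smul_add_smul hx hy hkky
        (α := α' + β' * α) (mul_pos_of_neg_of_neg hβ' hβ) (by rw [hkky_eq, hky_eq]; module)
        (hD₂.trans hD₁)
      have hM : Mratio C (k (k y)) x = Mratio C y x := by
        rw [hk.Mratio_apply_self hC hx hky, hk.Mratio_self_apply hC hx hy]
      rw [hc_eq, hC.Mratio_smul_left hc hy hx, mul_eq_right₀ (hC.Mratio_pos hy hx).ne'] at hM
      rw [hc_eq, hM, one_smul]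
    · obtain ⟨c, hc, hc_eq⟩ :=
        hC.exists_pos_smul_of_eq_smul_add_smul hx hky hkky hβ' hkky_eq hD₂
      refine hk.antimorphism.injOn hC hkky hy ?_
      rw [hc_eq, hk.antihomogeneous c hc _ hky, hc_eq, inv_smul_smul₀ hc.ne']
  · obtain ⟨c, hc, hc_eq⟩ := hC.exists_pos_smul_of_eq_smul_add_smul hx hy hky hβ hky_eq hD₁
    rw [hc_eq, hk.antihomogeneous c hc y hy, hc_eq, inv_smul_smul₀ hc.ne']

end IsSymmetryAt

theorem isSymmetryAt_linearEquiv_symm_comp {C : Set V} {u : V} {g : V → V} {x : V}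
    (hC : IsOrderUnitSpace C u) (hg : MapsTo g (interior C) (interior C))
    (hanti : IsAntihomogeneous C g) (hmor : IsOrderAntimorphism C g) (G : V ≃ₗ[ℝ] V)
    (hGC : ∀ w, G w ∈ C ↔ w ∈ C) (hGx : G.symm (g x) = x)
    (hG : ∀ z, Tendsto (fun t : ℝ => t⁻¹ • (g (x + t • z) - g x)) (𝓝[≠] 0)
      (𝓝 (-(G z)))) :
    IsSymmetryAt C (fun y => G.symm (g y)) x := by
  have hGsC : ∀ w, G.symm w ∈ C ↔ w ∈ C := fun w => by rw [← hGC, G.apply_symm_apply]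
  have hGcont : Continuous G :=
    hC.continuous_of_mapsTo hC (G : V →ₗ[ℝ] V) fun w => (hGC w).2
  have hGscont : Continuous G.symm :=
    hC.continuous_of_mapsTo hC (G.symm : V →ₗ[ℝ] V) fun w => (hGsC w).2
  have hGs_int : MapsTo G.symm (interior C) (interior C) :=
    (IsOpenMap.of_inverse hGcont G.symm_apply_apply G.apply_symm_apply).mapsTo_interior
      fun w => (hGsC w).2
  refine ⟨fun y hy => hGs_int (hg hy), fun c hc y hy => ?_, fun a ha b hb => ?_, hGx,
    fun d => ?_⟩
  · simp only [hanti c hc y hy, map_smul]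
  · rw [hmor a ha b hb, ← map_sub, hGsC]
  · simpa [Function.comp_def, hGx] using
      (hGscont.tendsto _).comp ((hG d).mono_left (nhdsGT_le_nhdsNE 0))

/-- **Theorem** (symmetries). The symmetry `S_x = G_x⁻¹ ∘ g` satisfies
`S_x x = x` and `S_x ∘ S_x = Id` on `C°`. -/
theorem symmetry_fixes_and_involutive
    (C : Set V) (u : V) (hous : IsOrderUnitSpace C u) (hsc : StrictlyConvexCone C)
    (g : V → V) (hbij : Set.BijOn g (interior C) (interior C))
    (hanti : IsAntihomogeneous C g) (hmor : IsOrderAntimorphism C g)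
    (x : V) (hx : x ∈ interior C)
    (G : V ≃ₗ[ℝ] V)
    (hG : ∀ z : V, Tendsto (fun t : ℝ => t⁻¹ • (g (x + t • z) - g x))
      (𝓝[≠] (0:ℝ)) (𝓝 (-(G z)))) :
    G.symm (g x) = x ∧ ∀ y ∈ interior C, G.symm (g (G.symm (g y))) = y := by
  have hGx : G x = g x :=
    neg_injective (tendsto_nhds_unique (hG x) (hanti.tendsto_slope_self hx))
  have hGC : ∀ w, G w ∈ C ↔ w ∈ C := fun w =>
    ⟨hmor.mem_of_neg_deriv_mem hanti hous hx (hbij.mapsTo hx) (hG w),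
      hmor.neg_deriv_mem hous hx (hG w)⟩
  have hS := isSymmetryAt_linearEquiv_symm_comp hous hbij.mapsTo hanti hmor G hGC
    (G.symm_apply_eq.2 hGx.symm) hG
  refine ⟨hS.apply_self, fun y hy => ?_⟩
  rcases subsingleton_or_nontrivial V with _ | _
  · exact Subsingleton.elim _ _
  · exact hS.apply_apply hous hsc hx hy
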